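/- arXiv:1904.12563 — 4 statements merged into one kernel-verified Lean document; each statement's English description precedes it below -/
import Mathlib

section
/- Let S be a unital ring, σ an injective endomorphism of S, δ a left σ-derivation, and f ∈ S[t;σ,δ] monic (or with invertible leading coefficient) of degree m ≥ 2. Then the Petit algebra S_f = S[t;σ,δ]/S[t;σ,δ]f, with multiplication g∘h = gh mod_r f, is a unital nonassociative ring, and it is a free left S-module of rank m with basis 1, t, …, t^{m−1}. -/
open Finset

/-- `g` has degree `< n`: `g = ∑_{i < n} ι(aᵢ) tⁱ`. -/
def DegLT {S R : Type*} [Ring S] [Ring R] (ι : S →+* R) (t : R) (g : R) (n : ℕ) : Prop :=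
  ∃ a : ℕ → S, g = ∑ i ∈ range n, ι (a i) * t ^ i

/-- The multiplication of the Petit algebra `S_f`, relationally: `r = g∘h = g·h mod_r f`,
i.e. `r` has degree `< m` and `g·h = q·f + r` for some `q`. -/
def PetitMulRel {S R : Type*} [Ring S] [Ring R] (ι : S →+* R) (t : R) (f : R) (m : ℕ)
    (g h r : R) : Prop :=
  DegLT ι t r m ∧ ∃ q : R, g * h = q * f + r

/-!
Write `f = u tᵐ + f₀` with `u` a unit and `f₀` of degree `< m`. The commutation rule
`t a = σ(a) t + δ(a)` shows that `(a tᵈ) f` has leading term `a σᵈ(u) tᵈ⁺ᵐ`, and `σᵈ(u)` is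
again a unit. Cancelling leading terms therefore gives right division by `f` with a remainder of
degree `< m`; and since `q f` has degree `≥ m` whenever `q ≠ 0`, the remainder is unique. The
unit and distributive laws of `S_f` are inherited from `R`, and the uniqueness of coefficients in
`R` makes `1, t, …, t^{m-1}` a basis.
-/

section DegLT

variable {S R : Type*} [Ring S] [Ring R] {ι : S →+* R} {t : R} {g h : R} {n k : ℕ}

theorem degLT_zero (ι : S →+* R) (t : R) (n : ℕ) : DegLT ι t 0 n := ⟨0, by simp⟩

theorem degLT_monomial (ι : S →+* R) (t : R) (a : S) {i n : ℕ} (hi : i < n) :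
    DegLT ι t (ι a * t ^ i) n := by
  refine ⟨Pi.single i a, ?_⟩
  rw [sum_eq_single_of_mem i (mem_range.2 hi) fun j _ hj => by simp [hj]]
  simp

theorem DegLT.add (hg : DegLT ι t g n) (hh : DegLT ι t h n) : DegLT ι t (g + h) n := by
  obtain ⟨a, rfl⟩ := hg
  obtain ⟨c, rfl⟩ := hh
  exact ⟨a + c, by simp only [Pi.add_apply, map_add, add_mul, sum_add_distrib]⟩

theorem DegLT.neg (hg : DegLT ι t g n) : DegLT ι t (-g) n := by
  obtain ⟨a, rfl⟩ := hg
  exact ⟨-a, by simp only [Pi.neg_apply, map_neg, neg_mul, sum_neg_distrib]⟩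

theorem DegLT.sub (hg : DegLT ι t g n) (hh : DegLT ι t h n) : DegLT ι t (g - h) n :=
  sub_eq_add_neg g h ▸ hg.add hh.neg

theorem degLT_sum {γ : Type*} (s : Finset γ) {F : γ → R} (hF : ∀ i ∈ s, DegLT ι t (F i) n) :
    DegLT ι t (∑ i ∈ s, F i) n :=
  sum_induction F (DegLT ι t · n) (fun _ _ => DegLT.add) (degLT_zero ι t n) hF

theorem DegLT.mono (hg : DegLT ι t g n) (hnk : n ≤ k) : DegLT ι t g k := by
  obtain ⟨a, rfl⟩ := hg
  exact degLT_sum _ fun i hi => degLT_monomial ι t _ ((mem_range.1 hi).trans_le hnk)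

theorem DegLT.const_mul (hg : DegLT ι t g n) (c : S) : DegLT ι t (ι c * g) n := by
  obtain ⟨a, rfl⟩ := hg
  rw [mul_sum]
  exact degLT_sum _ fun i hi => by
    rw [← mul_assoc, ← map_mul]
    exact degLT_monomial ι t _ (mem_range.1 hi)

theorem degLT_iff_exists_fin :
    DegLT ι t g n ↔ ∃ a : Fin n → S, g = ∑ i : Fin n, ι (a i) * t ^ (i : ℕ) := by
  constructor
  · rintro ⟨a, rfl⟩
    exact ⟨fun i => a i, (Fin.sum_univ_eq_sum_range (fun i => ι (a i) * t ^ i) n).symm⟩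
  · rintro ⟨a, rfl⟩
    exact degLT_sum _ fun i _ => degLT_monomial ι t (a i) i.isLt

end DegLT

section SkewCommutation

variable {S R : Type*} [Ring S] [Ring R] {ι : S →+* R} {t : R} {σ : S →+* S} {δ : S →+ S}
  {g h : R} {n k : ℕ}

theorem DegLT.t_mul (hrel : ∀ a : S, t * ι a = ι (σ a) * t + ι (δ a)) (hg : DegLT ι t g n) :
    DegLT ι t (t * g) (n + 1) := by
  obtain ⟨a, rfl⟩ := hg
  rw [mul_sum]
  refine degLT_sum _ fun i hi => ?_
  have hi : i < n := mem_range.1 hi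
  have : t * (ι (a i) * t ^ i) = ι (σ (a i)) * t ^ (i + 1) + ι (δ (a i)) * t ^ i := by
    rw [← mul_assoc, hrel, add_mul, mul_assoc, ← pow_succ']
  rw [this]
  exact (degLT_monomial ι t _ (by omega)).add (degLT_monomial ι t _ (by omega))

theorem DegLT.t_pow_mul (hrel : ∀ a : S, t * ι a = ι (σ a) * t + ι (δ a)) (hg : DegLT ι t g k)
    (d : ℕ) : DegLT ι t (t ^ d * g) (d + k) := by
  induction d with
  | zero => simpa using hg
  | succ d ih => simpa [pow_succ', mul_assoc, add_right_comm] using ih.t_mul hrel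

theorem DegLT.mul (hrel : ∀ a : S, t * ι a = ι (σ a) * t + ι (δ a)) (hg : DegLT ι t g n)
    (hh : DegLT ι t h (k + 1)) : DegLT ι t (g * h) (n + k) := by
  obtain ⟨a, rfl⟩ := hg
  rw [sum_mul]
  refine degLT_sum _ fun i hi => ?_
  rw [mul_assoc]
  exact ((hh.t_pow_mul hrel i).mono (by have := mem_range.1 hi; omega)).const_mul _

theorem t_pow_mul_eq (hrel : ∀ a : S, t * ι a = ι (σ a) * t + ι (δ a)) (a : S) (d : ℕ) :
    ∃ w, DegLT ι t w d ∧ t ^ d * ι a = ι (σ^[d] a) * t ^ d + w := by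
  induction d with
  | zero => exact ⟨0, degLT_zero ι t 0, by simp⟩
  | succ d ih =>
    obtain ⟨w, hw, hw_eq⟩ := ih
    refine ⟨ι (δ (σ^[d] a)) * t ^ d + t * w,
      (degLT_monomial ι t _ d.lt_succ_self).add (hw.t_mul hrel), ?_⟩
    rw [pow_succ', mul_assoc, hw_eq, mul_add, ← mul_assoc, hrel, add_mul, mul_assoc, ← pow_succ',
      Function.iterate_succ_apply', add_assoc]

theorem monomial_mul_eq (hrel : ∀ a : S, t * ι a = ι (σ a) * t + ι (δ a)) {f : R} {u : S}
    {m : ℕ} (hf : DegLT ι t (f - ι u * t ^ m) m) (a : S) (d : ℕ) :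
    ∃ w, DegLT ι t w (d + m) ∧ ι a * t ^ d * f = ι (a * σ^[d] u) * t ^ (d + m) + w := by
  obtain ⟨w, hw, hw_eq⟩ := t_pow_mul_eq hrel u d
  have hwt : DegLT ι t (w * t ^ m) (d + m) := by
    simpa using hw.mul hrel (degLT_monomial ι t 1 m.lt_succ_self)
  refine ⟨ι a * (w * t ^ m + t ^ d * (f - ι u * t ^ m)),
    (hwt.add (hf.t_pow_mul hrel d)).const_mul a, ?_⟩
  calc ι a * t ^ d * f = ι a * ((t ^ d * ι u) * t ^ m + t ^ d * (f - ι u * t ^ m)) := by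
        noncomm_ring
    _ = _ := by rw [hw_eq, map_mul, pow_add]; noncomm_ring

end SkewCommutation

section Basis

variable {S R : Type*} [Ring S] [Ring R] {ι : S →+* R} {t : R}

theorem eq_zero_of_sum_fin_eq_zero
    (hbasis : ∀ g : R, ∃! a : ℕ →₀ S, g = a.sum fun i c => ι c * t ^ i)
    {n : ℕ} {a : Fin n → S} (ha : ∑ i : Fin n, ι (a i) * t ^ (i : ℕ) = 0) : a = 0 := by
  set A : ℕ →₀ S := (Finsupp.equivFunOnFinite.symm a).embDomain Fin.valEmbedding
  have hA : (0 : R) = A.sum fun i c => ι c * t ^ i := by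
    rw [Finsupp.sum_embDomain, Finsupp.sum_fintype _ _ (by simp), ← ha]
    simp
  have hA0 : A = 0 := (hbasis 0).unique hA (by simp)
  funext i
  have := DFunLike.congr_fun hA0 (Fin.valEmbedding i)
  rwa [Finsupp.embDomain_apply_self] at this

theorem degLT_iff_existsUnique_fin
    (hbasis : ∀ g : R, ∃! a : ℕ →₀ S, g = a.sum fun i c => ι c * t ^ i) {g : R} {n : ℕ} :
    DegLT ι t g n ↔ ∃! a : Fin n → S, g = ∑ i : Fin n, ι (a i) * t ^ (i : ℕ) := by
  refine degLT_iff_exists_fin.trans ⟨fun ⟨a, ha⟩ => ⟨a, ha, fun c hc => ?_⟩, ExistsUnique.exists⟩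
  refine sub_eq_zero.1 (eq_zero_of_sum_fin_eq_zero hbasis ?_)
  simp only [Pi.sub_apply, map_sub, sub_mul, sum_sub_distrib, ← hc, ← ha, sub_self]

theorem eq_zero_of_degLT_monomial
    (hbasis : ∀ g : R, ∃! a : ℕ →₀ S, g = a.sum fun i c => ι c * t ^ i) {c : S} {n : ℕ}
    (hc : DegLT ι t (ι c * t ^ n) n) : c = 0 := by
  obtain ⟨a, ha⟩ := degLT_iff_exists_fin.1 hc
  have h := eq_zero_of_sum_fin_eq_zero hbasis (a := Fin.snoc (-a) c) (by
    simp [Fin.sum_univ_castSucc, ← ha])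
  simpa using congr_fun h (Fin.last n)

theorem exists_degLT (hbasis : ∀ g : R, ∃! a : ℕ →₀ S, g = a.sum fun i c => ι c * t ^ i)
    (g : R) : ∃ n, DegLT ι t g n := by
  obtain ⟨A, hA, -⟩ := hbasis g
  obtain ⟨n, hn⟩ := exists_nat_subset_range A.support
  exact ⟨n, A, hA.trans (Finsupp.sum_of_support_subset A hn _ fun i _ => by simp)⟩

end Basis

section Division

variable {S R : Type*} [Ring S] [Ring R] {ι : S →+* R} {t : R} {σ : S →+* S} {δ : S →+ S}
  {f : R} {u : S} {m : ℕ}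

theorem exists_eq_mul_add_degLT (hrel : ∀ a : S, t * ι a = ι (σ a) * t + ι (δ a))
    (hu : IsUnit u) (hf : DegLT ι t (f - ι u * t ^ m) m) {p : R} {n : ℕ} (hp : DegLT ι t p n) :
    ∃ q r, DegLT ι t r m ∧ p = q * f + r := by
  induction n generalizing p with
  | zero => exact ⟨0, p, hp.mono (Nat.zero_le m), by simp⟩
  | succ n ih =>
    by_cases hnm : n < m
    · exact ⟨0, p, hp.mono hnm, by simp⟩
    obtain ⟨a, rfl⟩ := hp
    obtain ⟨d, rfl⟩ : ∃ d, n = d + m := ⟨n - m, by omega⟩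
    obtain ⟨v, hv⟩ := (hu.map (σ ^ d)).exists_left_inv
    obtain ⟨w, hw, hw_eq⟩ := monomial_mul_eq hrel hf (a (d + m) * v) d
    rw [mul_assoc (a (d + m)), show v * σ^[d] u = 1 from hv, mul_one] at hw_eq
    have hlow : DegLT ι t (∑ i ∈ range (d + m), ι (a i) * t ^ i) (d + m) := ⟨a, rfl⟩
    obtain ⟨q, r, hr, hqr⟩ := ih (hlow.sub hw)
    refine ⟨ι (a (d + m) * v) * t ^ d + q, r, hr, ?_⟩
    rw [sum_range_succ, add_mul, add_assoc, ← hqr, hw_eq]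
    abel

theorem eq_zero_of_mul_degLT (hrel : ∀ a : S, t * ι a = ι (σ a) * t + ι (δ a))
    (hbasis : ∀ g : R, ∃! a : ℕ →₀ S, g = a.sum fun i c => ι c * t ^ i)
    (hu : IsUnit u) (hf : DegLT ι t (f - ι u * t ^ m) m) {q : R}
    (hq : DegLT ι t (q * f) m) : q = 0 := by
  have hf_deg : DegLT ι t f (m + 1) := by
    simpa using (hf.mono m.le_succ).add (degLT_monomial ι t u m.lt_succ_self)
  obtain ⟨n, hn⟩ := exists_degLT hbasis q
  induction n generalizing q with
  | zero => obtain ⟨a, rfl⟩ := hn; simp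
  | succ n ih =>
    obtain ⟨a, rfl⟩ := hn
    rw [sum_range_succ] at hq ⊢
    set q₀ := ∑ i ∈ range n, ι (a i) * t ^ i
    have hq₀ : DegLT ι t q₀ n := ⟨a, rfl⟩
    obtain ⟨w, hw, hw_eq⟩ := monomial_mul_eq hrel hf (a n) n
    have hlead : DegLT ι t (ι (a n * σ^[n] u) * t ^ (n + m)) (n + m) := by
      have : ι (a n * σ^[n] u) * t ^ (n + m) = (q₀ + ι (a n) * t ^ n) * f - w - q₀ * f := by
        rw [add_mul, hw_eq]; abel
      rw [this]
      exact ((hq.mono (by omega)).sub hw).sub (hq₀.mul hrel hf_deg)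
    have han : a n = 0 :=
      (hu.map (σ ^ n)).mul_left_eq_zero.1 (eq_zero_of_degLT_monomial hbasis hlead)
    rw [han, map_zero, zero_mul, add_zero] at hq ⊢
    exact ih hq hq₀

end Division

section Petit

variable {S R : Type*} [Ring S] [Ring R] {ι : S →+* R} {t : R} {σ : S →+* S} {δ : S →+ S}
  {f : R} {u : S} {m : ℕ} {g g' h h' r r' : R}

theorem exists_petitMulRel (hrel : ∀ a : S, t * ι a = ι (σ a) * t + ι (δ a)) (hu : IsUnit u)
    (hf : DegLT ι t (f - ι u * t ^ m) m) (hg : DegLT ι t g m) (hh : DegLT ι t h m) :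
    ∃ r, PetitMulRel ι t f m g h r := by
  obtain ⟨q, r, hr, hqr⟩ := exists_eq_mul_add_degLT hrel hu hf (hg.mul hrel (hh.mono m.le_succ))
  exact ⟨r, hr, q, hqr⟩

theorem PetitMulRel.unique (hrel : ∀ a : S, t * ι a = ι (σ a) * t + ι (δ a))
    (hbasis : ∀ g : R, ∃! a : ℕ →₀ S, g = a.sum fun i c => ι c * t ^ i) (hu : IsUnit u)
    (hf : DegLT ι t (f - ι u * t ^ m) m) (h₁ : PetitMulRel ι t f m g h r)
    (h₂ : PetitMulRel ι t f m g h r') : r = r' := by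
  obtain ⟨hr, q, hq⟩ := h₁
  obtain ⟨hr', q', hq'⟩ := h₂
  have hdiff : (q' - q) * f = r - r' := by
    rw [sub_mul, eq_sub_of_add_eq hq'.symm, eq_sub_of_add_eq hq.symm]; abel
  have hq_sub : q' - q = 0 := eq_zero_of_mul_degLT hrel hbasis hu hf (hdiff ▸ hr.sub hr')
  rw [← sub_eq_zero, ← hdiff, hq_sub, zero_mul]

theorem petitMulRel_one_left (hg : DegLT ι t g m) : PetitMulRel ι t f m 1 g g :=
  ⟨hg, 0, by simp⟩

theorem petitMulRel_one_right (hg : DegLT ι t g m) : PetitMulRel ι t f m g 1 g :=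
  ⟨hg, 0, by simp⟩

theorem PetitMulRel.add_left (h₁ : PetitMulRel ι t f m g h r) (h₂ : PetitMulRel ι t f m g' h r') :
    PetitMulRel ι t f m (g + g') h (r + r') := by
  obtain ⟨hr, q, hq⟩ := h₁
  obtain ⟨hr', q', hq'⟩ := h₂
  exact ⟨hr.add hr', q + q', by rw [add_mul, hq, hq', add_mul]; abel⟩

theorem PetitMulRel.add_right (h₁ : PetitMulRel ι t f m g h r)
    (h₂ : PetitMulRel ι t f m g h' r') : PetitMulRel ι t f m g (h + h') (r + r') := by
  obtain ⟨hr, q, hq⟩ := h₁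
  obtain ⟨hr', q', hq'⟩ := h₂
  exact ⟨hr.add hr', q + q', by rw [mul_add, hq, hq', add_mul]; abel⟩

end Petit

theorem petit_algebra_unital_free_general {S R : Type*} [Ring S] [Ring R]
    (σ : S →+* S) (δ : S →+ S)
    (ι : S →+* R) (t : R)
    (hrel : ∀ a : S, t * ι a = ι (σ a) * t + ι (δ a))
    (hbasis : ∀ g : R, ∃! a : ℕ →₀ S, g = a.sum fun i c => ι c * t ^ i)
    (f : R) (m : ℕ) (b : ℕ → S)
    (hf : f = ∑ i ∈ range m, ι (b i) * t ^ i + ι (b m) * t ^ m) (hlead : IsUnit (b m)) :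
    -- the multiplication is well defined on elements of degree < m
    (∀ g h : R, DegLT ι t g m → DegLT ι t h m → ∃! r : R, PetitMulRel ι t f m g h r) ∧
    -- `1` is a two-sided unit
    (∀ g : R, DegLT ι t g m → PetitMulRel ι t f m 1 g g ∧ PetitMulRel ι t f m g 1 g) ∧
    -- left distributivity
    (∀ g h h' r r' : R, DegLT ι t g m → DegLT ι t h m → DegLT ι t h' m →
      PetitMulRel ι t f m g h r → PetitMulRel ι t f m g h' r' →
      PetitMulRel ι t f m g (h + h') (r + r')) ∧
    -- right distributivity
    (∀ g g' h r r' : R, DegLT ι t g m → DegLT ι t g' m → DegLT ι t h m →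
      PetitMulRel ι t f m g h r → PetitMulRel ι t f m g' h r' →
      PetitMulRel ι t f m (g + g') h (r + r')) ∧
    -- `S_f` is a free left `S`-module with basis `1, t, …, t^{m-1}`
    (∀ g : R, DegLT ι t g m ↔ ∃! a : Fin m → S, g = ∑ i : Fin m, ι (a i) * t ^ (i : ℕ)) := by
  have hf' : DegLT ι t (f - ι (b m) * t ^ m) m := by
    rw [hf, add_sub_cancel_right]
    exact ⟨b, rfl⟩
  refine ⟨fun g h hg hh => ?_, fun g hg => ⟨petitMulRel_one_left hg, petitMulRel_one_right hg⟩,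
    fun _ _ _ _ _ _ _ _ => PetitMulRel.add_right, fun _ _ _ _ _ _ _ _ => PetitMulRel.add_left,
    fun _ => degLT_iff_existsUnique_fin hbasis⟩
  obtain ⟨r, hr⟩ := exists_petitMulRel hrel hlead hf' hg hh
  exact ⟨r, hr, fun r' hr' => hr'.unique hrel hbasis hlead hf' hr⟩

/-- Let `S` be a unital ring, `σ` an injective endomorphism, `δ` a left
`σ`-derivation, and `f ∈ S[t;σ,δ]` of degree `m ≥ 2` with invertible leading coefficient.
The Petit algebra `S_f = S[t;σ,δ]/S[t;σ,δ]f` with multiplication `g∘h = gh mod_r f` is a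
unital nonassociative ring (the product is well defined, `1` is a two-sided unit, and the
product is left and right distributive over addition), and `S_f` is a free left `S`-module
of rank `m` with basis `1, t, …, t^{m-1}`. -/
theorem petit_algebra_unital_free {S R : Type*} [Ring S] [Ring R]
    (σ : S →+* S) (hσ : Function.Injective σ) (δ : S →+ S)
    (hδ : ∀ a b : S, δ (a * b) = σ a * δ b + δ a * b)
    (ι : S →+* R) (hι : Function.Injective ι) (t : R)
    (hrel : ∀ a : S, t * ι a = ι (σ a) * t + ι (δ a))
    (hbasis : ∀ g : R, ∃! a : ℕ →₀ S, g = a.sum fun i c => ι c * t ^ i)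
    (f : R) (m : ℕ) (hm : 2 ≤ m) (b : ℕ → S)
    (hf : f = ∑ i ∈ range m, ι (b i) * t ^ i + ι (b m) * t ^ m) (hlead : IsUnit (b m)) :
    -- the multiplication is well defined on elements of degree < m
    (∀ g h : R, DegLT ι t g m → DegLT ι t h m → ∃! r : R, PetitMulRel ι t f m g h r) ∧
    -- `1` is a two-sided unit
    (∀ g : R, DegLT ι t g m → PetitMulRel ι t f m 1 g g ∧ PetitMulRel ι t f m g 1 g) ∧
    -- left distributivity
    (∀ g h h' r r' : R, DegLT ι t g m → DegLT ι t h m → DegLT ι t h' m →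
      PetitMulRel ι t f m g h r → PetitMulRel ι t f m g h' r' →
      PetitMulRel ι t f m g (h + h') (r + r')) ∧
    -- right distributivity
    (∀ g g' h r r' : R, DegLT ι t g m → DegLT ι t g' m → DegLT ι t h m →
      PetitMulRel ι t f m g h r → PetitMulRel ι t f m g' h r' →
      PetitMulRel ι t f m (g + g') h (r + r')) ∧
    -- `S_f` is a free left `S`-module with basis `1, t, …, t^{m-1}`
    (∀ g : R, DegLT ι t g m ↔ ∃! a : Fin m → S, g = ∑ i : Fin m, ι (a i) * t ^ (i : ℕ)) :=
  petit_algebra_unital_free_general σ δ ι t hrel hbasis f m b hf hlead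
end

section
/- Let D be a ring with center C, σ ∈ Aut(D) with σ|_C of finite order m, S_0 = C ∩ Fix(σ), and suppose C/S_0 is a cyclic Galois ring extension of degree m with Galois group generated by σ|_C. For any d ∈ D^×, the centralizer of C in the (possibly nonassociative) algebra (D,σ,d) = D[t;σ]/D[t;σ](t^m − d) is exactly D. -/
open Finset

/-- The multiplication of the Petit algebra `(D,σ,d) = D[t;σ]/D[t;σ](t^m − d)` on
coefficient vectors `Fin m → D`. -/
def pmul {D : Type*} [Ring D] (σ : D ≃+* D) (d : D) (m : ℕ) (a b : Fin m → D) :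
    Fin m → D := fun k =>
  ∑ i : Fin m, ∑ j : Fin m,
    if (i : ℕ) + j = k then a i * (σ ^ (i : ℕ)) (b j)
    else if (i : ℕ) + j = (k : ℕ) + m then a i * (σ ^ (i : ℕ)) (b j) * (σ ^ (k : ℕ)) d
    else 0

/-- `C/S₀` is a cyclic Galois extension of degree `m` with group `⟨σ|_C⟩`, where `C` is the
center of `D` (Chase–Harrison–Rosenberg Galois coordinates). -/
def CenterCyclicGalois {D : Type*} [Ring D] (σ : D ≃+* D) (m : ℕ) : Prop :=
  0 < m ∧ (∀ c ∈ Subring.center D, (σ ^ m) c = c) ∧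
    ∀ j < m, ∃ (n : ℕ) (x y : Fin n → D),
      (∀ l, x l ∈ Subring.center D ∧ y l ∈ Subring.center D) ∧
      ∀ i < m, (∑ l, x l * (σ ^ i) (y l)) = if i = j then 1 else 0

/-! Multiplying by a constant `c ∈ C` acts coefficientwise, `(a tⁱ) c = a σⁱ(c) tⁱ`, so `a`
centralizes `C` iff every coefficient satisfies `aᵢ σⁱ(c) = aᵢ c` for all `c ∈ C`. For
`0 < i < m` the Galois coordinates of `C/S₀` give central `xₗ, yₗ` with
`∑ xₗ (yₗ − σⁱ(yₗ)) = 1`, whence `aᵢ = ∑ xₗ (aᵢ yₗ − aᵢ σⁱ(yₗ)) = 0`. -/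

section PetitMul

variable {D : Type*} [Ring D] (σ : D ≃+* D) (d : D) {m : ℕ} (hm : 0 < m)

lemma pmul_single_zero_right (a : Fin m → D) (c : D) (k : Fin m) :
    pmul σ d m a (Pi.single ⟨0, hm⟩ c) k = a k * (σ ^ (k : ℕ)) c := by
  unfold pmul
  rw [Finset.sum_comm, Fintype.sum_eq_single ⟨0, hm⟩ fun j hj => by
    simp [Pi.single_eq_of_ne hj]]
  rw [Fintype.sum_eq_single k fun i hi => ?_]
  · simp
  · have hik : (i : ℕ) ≠ k := Fin.val_ne_of_ne hi
    have hikm : (i : ℕ) ≠ k + m := by omega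
    simp [hik, hikm]

lemma pmul_single_zero_left (a : Fin m → D) (c : D) (k : Fin m) :
    pmul σ d m (Pi.single ⟨0, hm⟩ c) a k = c * a k := by
  unfold pmul
  rw [Fintype.sum_eq_single ⟨0, hm⟩ fun i hi => by simp [Pi.single_eq_of_ne hi]]
  rw [Fintype.sum_eq_single k fun j hj => ?_]
  · simp
  · have hjk : (j : ℕ) ≠ k := Fin.val_ne_of_ne hj
    have hjkm : (j : ℕ) ≠ k + m := by omega
    simp [hjk, hjkm]

lemma pmul_single_zero_comm_iff (a : Fin m → D) (c : D) :
    pmul σ d m a (Pi.single ⟨0, hm⟩ c) = pmul σ d m (Pi.single ⟨0, hm⟩ c) a ↔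
      ∀ k : Fin m, a k * (σ ^ (k : ℕ)) c = c * a k := by
  simp only [funext_iff, pmul_single_zero_right, pmul_single_zero_left]

end PetitMul

lemma CenterCyclicGalois.exists_sum_mul_sub_eq_one {D : Type*} [Ring D] {σ : D ≃+* D} {m : ℕ}
    (hGal : CenterCyclicGalois σ m) {i : ℕ} (hi0 : i ≠ 0) (him : i < m) :
    ∃ (n : ℕ) (x y : Fin n → D), (∀ l, x l ∈ Subring.center D ∧ y l ∈ Subring.center D) ∧
      ∑ l, x l * (y l - (σ ^ i) (y l)) = 1 := by
  obtain ⟨n, x, y, hxy, hsum⟩ := hGal.2.2 0 hGal.1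
  refine ⟨n, x, y, hxy, ?_⟩
  have h0 : ∑ l, x l * y l = 1 := by simpa using hsum 0 hGal.1
  simp only [mul_sub, Finset.sum_sub_distrib, h0, hsum i him, if_neg hi0, sub_zero]

/-- `hsum` exhibits `1` in the ideal of the center generated by the elements `c - f c`. -/
lemma eq_zero_of_mul_apply_eq_mul {D : Type*} [Ring D] (f : D → D) (u : D)
    (hu : ∀ c ∈ Subring.center D, u * f c = u * c) {n : ℕ} (x y : Fin n → D)
    (hxy : ∀ l, x l ∈ Subring.center D ∧ y l ∈ Subring.center D)
    (hsum : ∑ l, x l * (y l - f (y l)) = 1) : u = 0 := by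
  calc u = u * ∑ l, x l * (y l - f (y l)) := by rw [hsum, mul_one]
    _ = ∑ l, x l * (u * y l - u * f (y l)) := by
        rw [Finset.mul_sum]
        refine Finset.sum_congr rfl fun l _ => ?_
        rw [← mul_assoc, Subring.mem_center_iff.mp (hxy l).1 u, mul_assoc, mul_sub, mul_sub]
    _ = 0 := by simp [hu _ (hxy _).2]

theorem centralizer_of_center_in_petit_general {D : Type*} [Ring D]
    (σ : D ≃+* D) (m : ℕ) (hGal : CenterCyclicGalois σ m)
    (d : D) :
    ∀ a : Fin m → D,
      (∀ c ∈ Subring.center D,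
        pmul σ d m a (Pi.single (⟨0, hGal.1⟩ : Fin m) c) =
          pmul σ d m (Pi.single (⟨0, hGal.1⟩ : Fin m) c) a)
      ↔ ∀ i : Fin m, (i : ℕ) ≠ 0 → a i = 0 := by
  intro a
  simp only [pmul_single_zero_comm_iff]
  constructor
  · intro hcomm i hi
    obtain ⟨n, x, y, hxy, hsum⟩ := hGal.exists_sum_mul_sub_eq_one hi i.isLt
    refine eq_zero_of_mul_apply_eq_mul _ (a i) (fun c hc => ?_) x y hxy hsum
    rw [hcomm c hc i, Subring.mem_center_iff.mp hc (a i)]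
  · intro hz c hc k
    by_cases hk : (k : ℕ) = 0
    · rw [hk, pow_zero, RingAut.one_apply]
      exact Subring.mem_center_iff.mp hc (a k)
    · simp [hz k hk]

/-- Let `D` be a ring with center `C`, `σ ∈ Aut(D)` with `σ|_C` of finite order
`m`, and `C/S₀` cyclic Galois of degree `m` with group `⟨σ|_C⟩`.  For any unit `d ∈ Dˣ`, the
centralizer of `C` in `(D,σ,d) = D[t;σ]/D[t;σ](t^m − d)` is exactly `D`: an element
`a = ∑ aᵢ tⁱ` commutes with every `c ∈ C` iff all its coefficients of positive degree
vanish. -/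
theorem centralizer_of_center_in_petit {D : Type*} [Ring D]
    (σ : D ≃+* D) (m : ℕ) (hGal : CenterCyclicGalois σ m)
    (d : D) (hd : IsUnit d) :
    ∀ a : Fin m → D,
      (∀ c ∈ Subring.center D,
        pmul σ d m a (Pi.single (⟨0, hGal.1⟩ : Fin m) c) =
          pmul σ d m (Pi.single (⟨0, hGal.1⟩ : Fin m) c) a)
      ↔ ∀ i : Fin m, (i : ℕ) ≠ 0 → a i = 0 :=
  centralizer_of_center_in_petit_general σ m hGal d
end

section
/- Let D be a ring with center C, σ ∈ Aut(D) with σ|_C of finite order m, S_0 = C ∩ Fix(σ), C/S_0 cyclic Galois of degree m with group ⟨σ|_C⟩, and d ∈ D^×. Let τ ∈ Aut_{S_0}(D) commute with σ and let k ∈ C^× satisfy τ(d) = (∏_{l=0}^{m−1} σ^l(k))·d. Then the map H_{τ,k}: (D,σ,d) → (D,σ,d) defined by ∑_{i=0}^{m−1} x_i t^i ↦ τ(x_0) + ∑_{i=1}^{m−1} τ(x_i)(∏_{l=0}^{i−1} σ^l(k)) t^i is an algebra automorphism of (D,σ,d) extending τ. -/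
open Finset

/-!
With `N i = k σ(k) ⋯ σⁱ⁻¹(k)` (`partialNorm σ k i`), a central unit satisfying the cocycle
identity `N (i + j) = N i · σⁱ(N j)`, the map sends `x tⁱ` to `τ(x) N i tⁱ`. On a product of
monomials `x tⁱ · y tʲ`, since `τ` commutes with `σ` and `N i` is central, the factors `N i` and
`σⁱ(N j)` recombine to `N (i + j)`. When `i + j = p + m`, reduction modulo `tᵐ - d` produces a
factor `σᵖ(d)`, and `τ(d) = N m · d` supplies exactly the missing `σᵖ(N m)`, because
`N (p + m) = N p · σᵖ(N m)`. Bijectivity holds coordinatewise since `τ` is bijective and each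
`N i` is a unit.
-/

section PartialNorm

variable {D : Type*} [Semiring D] (σ : D ≃+* D) (k : D)

def partialNorm (n : ℕ) : D := ((List.range n).map fun l => (σ ^ l) k).prod

@[simp]
theorem partialNorm_zero : partialNorm σ k 0 = 1 := by
  simp [partialNorm]

theorem partialNorm_add (a b : ℕ) :
    partialNorm σ k (a + b) = partialNorm σ k a * (σ ^ a) (partialNorm σ k b) := by
  simp only [partialNorm, List.range_add, List.map_append, List.prod_append, map_list_prod,
    List.map_map]
  congr 3
  funext l
  simp [Function.iterate_add_apply]

variable {σ k}

theorem partialNorm_mem_center (hk : k ∈ Set.center D) (n : ℕ) :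
    partialNorm σ k n ∈ Set.center D :=
  (Subsemiring.center D).list_prod_mem fun _ hx => by
    obtain ⟨l, -, rfl⟩ := List.mem_map.mp hx
    exact MulEquivClass.apply_mem_center _ hk

theorem IsUnit.partialNorm (hk : IsUnit k) (n : ℕ) : IsUnit (partialNorm σ k n) :=
  List.prod_isUnit fun _ hx => by
    obtain ⟨l, -, rfl⟩ := List.mem_map.mp hx
    exact hk.map _

end PartialNorm

theorem RingEquiv.apply_pow_apply_of_commute {R : Type*} [Semiring R] {σ τ : R ≃+* R}
    (h : ∀ x, τ (σ x) = σ (τ x)) (n : ℕ) (x : R) : τ ((σ ^ n) x) = (σ ^ n) (τ x) :=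
  DFunLike.congr_fun ((show Commute τ σ from RingEquiv.ext h).pow_right n) x

section TwistMap

variable {D : Type*} [Semiring D] {m : ℕ} (σ τ : D ≃+* D) (k : D)

def twistMap (a : Fin m → D) : Fin m → D := fun i => τ (a i) * partialNorm σ k i

theorem twistMap_add (a b : Fin m → D) :
    twistMap σ τ k (a + b) = twistMap σ τ k a + twistMap σ τ k b := by
  funext i
  simp [twistMap, add_mul]

theorem twistMap_single [DecidableEq (Fin m)] (i : Fin m) (c : D) :
    twistMap σ τ k (Pi.single i c) = Pi.single i (τ c * partialNorm σ k i) :=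
  funext <| Pi.apply_single (fun (j : Fin m) x => τ x * partialNorm σ k j) (fun _ => by simp) i c

variable {σ τ k}

theorem twistMap_bijective (hk : IsUnit k) : Function.Bijective (twistMap (m := m) σ τ k) :=
  Function.Bijective.piMap (f := fun (i : Fin m) x => τ x * partialNorm σ k i) fun i =>
    (IsUnit.isUnit_iff_mulRight_bijective.mp (hk.partialNorm i)).comp τ.bijective

variable (hτσ : ∀ x, τ (σ x) = σ (τ x)) (hk : k ∈ Set.center D)
include hτσ hk

theorem map_mul_pow_apply_mul_partialNorm (x y : D) (i j : ℕ) :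
    τ (x * (σ ^ i) y) * partialNorm σ k (i + j) =
      τ x * partialNorm σ k i * (σ ^ i) (τ y * partialNorm σ k j) := by
  rw [map_mul, RingEquiv.apply_pow_apply_of_commute hτσ, partialNorm_add, map_mul]
  simp only [mul_assoc]
  rw [((partialNorm_mem_center hk i).comm _).left_comm]

theorem map_mul_pow_apply_mul_pow_apply_mul_partialNorm {d : D}
    (hτd : τ d = partialNorm σ k m * d) (x y : D) {i j p : ℕ} (hijp : i + j = p + m) :
    τ (x * (σ ^ i) y * (σ ^ p) d) * partialNorm σ k p =
      τ x * partialNorm σ k i * (σ ^ i) (τ y * partialNorm σ k j) * (σ ^ p) d := by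
  have hNp := (partialNorm_mem_center (σ := σ) hk p).comm
  calc τ (x * (σ ^ i) y * (σ ^ p) d) * partialNorm σ k p
      = τ (x * (σ ^ i) y) * ((σ ^ p) (partialNorm σ k m) * (σ ^ p) d) * partialNorm σ k p := by
        rw [map_mul τ _ ((σ ^ p) d), RingEquiv.apply_pow_apply_of_commute hτσ, hτd,
          map_mul (σ ^ p)]
    _ = τ (x * (σ ^ i) y) * partialNorm σ k (p + m) * (σ ^ p) d := by
        simp only [partialNorm_add, mul_assoc]
        rw [← (hNp _).eq, ← (hNp _).left_comm]
    _ = _ := by rw [← hijp, map_mul_pow_apply_mul_partialNorm hτσ hk]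

end TwistMap

theorem twistMap_pmul {D : Type*} [Ring D] {m : ℕ} {σ τ : D ≃+* D} {k d : D}
    (hτσ : ∀ x, τ (σ x) = σ (τ x)) (hk : k ∈ Set.center D)
    (hτd : τ d = partialNorm σ k m * d) (a b : Fin m → D) :
    twistMap σ τ k (pmul σ d m a b) = pmul σ d m (twistMap σ τ k a) (twistMap σ τ k b) := by
  funext p
  simp only [twistMap, pmul, map_sum, Finset.sum_mul]
  refine Finset.sum_congr rfl fun i _ => Finset.sum_congr rfl fun j _ => ?_
  split_ifs with hlow hhigh
  · rw [← hlow, map_mul_pow_apply_mul_partialNorm hτσ hk]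
  · exact map_mul_pow_apply_mul_pow_apply_mul_partialNorm hτσ hk hτd _ _ hhigh
  · simp

theorem H_tau_k_is_automorphism_general {D : Type*} [Ring D]
    (σ : D ≃+* D) (m : ℕ) (hGal : CenterCyclicGalois σ m)
    (d : D)
    (τ : D ≃+* D) (hτσ : ∀ x : D, τ (σ x) = σ (τ x))
    (k : D) (hkC : k ∈ Subring.center D) (hk : IsUnit k)
    (hτd : τ d = (((List.range m).map fun l => (σ ^ l) k).prod) * d)
    (H : (Fin m → D) → Fin m → D)
    (hH : H = fun (a : Fin m → D) (i : Fin m) => τ (a i) * ((List.range (i : ℕ)).map fun l => (σ ^ l) k).prod) :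
    (∀ a b : Fin m → D, H (a + b) = H a + H b) ∧
    (∀ a b : Fin m → D, H (pmul σ d m a b) = pmul σ d m (H a) (H b)) ∧
    Function.Bijective H ∧
    (∀ c : D, H (Pi.single (⟨0, hGal.1⟩ : Fin m) c) =
      Pi.single (⟨0, hGal.1⟩ : Fin m) (τ c)) := by
  obtain rfl : H = twistMap σ τ k := hH
  refine ⟨twistMap_add σ τ k, twistMap_pmul hτσ hkC hτd, twistMap_bijective hk, fun c => ?_⟩
  rw [twistMap_single, Fin.val_mk, partialNorm_zero, mul_one]

/-- Let `D` be a ring with center `C`, `σ ∈ Aut(D)` with `σ|_C` of finite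
order `m`, `S₀ = C ∩ Fix(σ)`, `C/S₀` cyclic Galois of degree `m` with group `⟨σ|_C⟩`, and
`d ∈ Dˣ`.  Let `τ ∈ Aut_{S₀}(D)` commute with `σ` and let `k ∈ Cˣ` satisfy
`τ(d) = (∏_{l<m} σˡ(k))·d`.  Then `H_{τ,k} : ∑ xᵢ tⁱ ↦ ∑ τ(xᵢ)(∏_{l<i} σˡ(k)) tⁱ` is an
algebra automorphism of `(D,σ,d)` (additive, multiplicative and bijective) extending `τ`. -/
theorem H_tau_k_is_automorphism {D : Type*} [Ring D]
    (σ : D ≃+* D) (m : ℕ) (hGal : CenterCyclicGalois σ m)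
    (d : D) (hd : IsUnit d)
    (τ : D ≃+* D) (hτσ : ∀ x : D, τ (σ x) = σ (τ x))
    (hτS0 : ∀ x ∈ Subring.center D, σ x = x → τ x = x)
    (k : D) (hkC : k ∈ Subring.center D) (hk : IsUnit k)
    (hτd : τ d = (((List.range m).map fun l => (σ ^ l) k).prod) * d)
    (H : (Fin m → D) → Fin m → D)
    (hH : H = fun (a : Fin m → D) (i : Fin m) => τ (a i) * ((List.range (i : ℕ)).map fun l => (σ ^ l) k).prod) :
    (∀ a b : Fin m → D, H (a + b) = H a + H b) ∧
    (∀ a b : Fin m → D, H (pmul σ d m a b) = pmul σ d m (H a) (H b)) ∧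
    Function.Bijective H ∧
    (∀ c : D, H (Pi.single (⟨0, hGal.1⟩ : Fin m) c) =
      Pi.single (⟨0, hGal.1⟩ : Fin m) (τ c)) :=
  H_tau_k_is_automorphism_general σ m hGal d τ hτσ k hkC hk hτd H hH
end

section
/- In the setting of a nonassociative generalized cyclic Azumaya algebra A = (D,σ,d) with d ∈ D^×, the subgroup of S_0-algebra automorphisms of A extending the identity on D is isomorphic to the group {k ∈ C^× : N_{C/S_0}(k) = 1}, where N_{C/S_0}(k) = ∏_{l=0}^{m−1} σ^l(k). -/
open Finset

/-- The set of `S₀`-algebra automorphisms of `(D,σ,d)` extending the identity of `D`. -/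
def AutExtendingId {D : Type*} [Ring D] (σ : D ≃+* D) (d : D) (m : ℕ) (hm : 0 < m) :
    Set ((Fin m → D) → Fin m → D) :=
  {H | (∀ a b : Fin m → D, H (a + b) = H a + H b) ∧
       (∀ a b : Fin m → D, H (pmul σ d m a b) = pmul σ d m (H a) (H b)) ∧
       Function.Bijective H ∧
       (∀ c : D, H (Pi.single (⟨0, hm⟩ : Fin m) c) = Pi.single (⟨0, hm⟩ : Fin m) c)}

/-- The group of norm-one central units: `{k ∈ Cˣ : N_{C/S₀}(k) = ∏_{l<m} σˡ(k) = 1}`. -/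
def NormOneSet {D : Type*} [Ring D] (σ : D ≃+* D) (m : ℕ) : Set D :=
  {k | k ∈ Subring.center D ∧ IsUnit k ∧ (((List.range m).map fun l => (σ ^ l) k).prod) = 1}

namespace Aux14
variable {D : Type*} [Ring D] (σ : D ≃+* D)

/-- The truncated norm `∏_{l<n} σˡ(k)`. -/
def NN (n : ℕ) (k : D) : D := ((List.range n).map fun l => (σ ^ l) k).prod

lemma NN_zero (k : D) : NN σ 0 k = 1 := rfl

lemma NN_succ (n : ℕ) (k : D) : NN σ (n + 1) k = NN σ n k * (σ ^ n) k := by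
  simp [NN, List.range_succ]

lemma one_apply' (x : D) : (1 : D ≃+* D) x = x := rfl

lemma pow_zero_apply (x : D) : (σ ^ 0) x = x := by rw [pow_zero]; rfl

lemma NN_one' (k : D) : NN σ 1 k = k := by
  rw [NN_succ, NN_zero, one_mul, pow_zero_apply]

lemma mem_center_apply {k : D} (hk : k ∈ Subring.center D) (n : ℕ) :
    (σ ^ n) k ∈ Subring.center D := by
  rw [Subring.mem_center_iff] at hk ⊢
  intro g
  have := hk ((σ ^ n).symm g)
  have h2 := congrArg (σ ^ n) this
  rw [map_mul, map_mul, RingEquiv.apply_symm_apply] at h2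
  exact h2

lemma NN_mem_center {k : D} (hk : k ∈ Subring.center D) (n : ℕ) :
    NN σ n k ∈ Subring.center D := by
  induction n with
  | zero => simpa [NN_zero] using Subring.one_mem _
  | succ n ih => rw [NN_succ]; exact Subring.mul_mem _ ih (mem_center_apply σ hk n)

lemma pow_apply_NN (i j : ℕ) (k : D) :
    (σ ^ i) (NN σ j k) = ((List.range j).map fun l => (σ ^ (i + l)) k).prod := by
  induction j with
  | zero => simp [NN_zero]
  | succ j ih =>
      rw [NN_succ, map_mul, ih]
      have : (σ ^ i) ((σ ^ j) k) = (σ ^ (i + j)) k := by rw [pow_add]; rfl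
      rw [this, List.range_succ, List.map_append, List.prod_append]
      simp only [List.map_cons, List.map_nil, List.prod_cons, List.prod_nil, mul_one]

lemma NN_add (i j : ℕ) (k : D) :
    NN σ (i + j) k = NN σ i k * (σ ^ i) (NN σ j k) := by
  rw [pow_apply_NN]
  rw [NN, NN, List.range_add, List.map_append, List.prod_append, List.map_map]
  rfl

lemma NN_mul {k : D} (l : D) (hk : k ∈ Subring.center D) (n : ℕ) :
    NN σ n (k * l) = NN σ n k * NN σ n l := by
  induction n with
  | zero => simp [NN_zero]
  | succ n ih =>
      rw [NN_succ, NN_succ, NN_succ, ih, map_mul]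
      have hc := Subring.mem_center_iff.mp (mem_center_apply σ hk n) (NN σ n l)
      rw [mul_assoc, ← mul_assoc (NN σ n l), hc, mul_assoc, ← mul_assoc, ← mul_assoc]

/-- If `k` is central and `k * r = 1 = r * k` then `r` is central. -/
lemma inv_mem_center {k r : D} (hk : k ∈ Subring.center D)
    (h1 : k * r = 1) (h2 : r * k = 1) : r ∈ Subring.center D := by
  rw [Subring.mem_center_iff] at hk ⊢
  intro g
  have : r * (g * k) * r = r * (k * g) * r := by rw [hk]
  calc g * r = r * k * g * r := by rw [h2, one_mul]
    _ = r * (k * g) * r := by rw [mul_assoc r k g]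
    _ = r * (g * k) * r := this.symm
    _ = r * g * (k * r) := by rw [mul_assoc, mul_assoc, mul_assoc]
    _ = r * g := by rw [h1, mul_one]

lemma NN_one (n : ℕ) : NN σ n (1 : D) = 1 := by
  induction n with
  | zero => simp [NN_zero]
  | succ n ih => rw [NN_succ]; simp [ih]

lemma NN_mul_NN_inv {k r : D} (hk : k ∈ Subring.center D)
    (h1 : k * r = 1) (n : ℕ) : NN σ n k * NN σ n r = 1 := by
  rw [← NN_mul σ r hk n, h1, NN_one]

lemma central_right {z : D} (hz : z ∈ Subring.center D) (x y : D) :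
    x * z * y = x * y * z := by
  rw [mul_assoc, ← Subring.mem_center_iff.mp hz y, ← mul_assoc]

variable (d : D) {m : ℕ}

lemma pmul_single_single (p q k : Fin m) (x y : D) :
    pmul σ d m (Pi.single p x) (Pi.single q y) k =
      if (p : ℕ) + q = k then x * (σ ^ (p : ℕ)) y
      else if (p : ℕ) + q = (k : ℕ) + m then x * (σ ^ (p : ℕ)) y * (σ ^ (k : ℕ)) d
      else 0 := by
  unfold pmul
  rw [Fintype.sum_eq_single p, Fintype.sum_eq_single q]
  · simp
  · intro j hj; simp [Pi.single_eq_of_ne hj]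
  · intro i hi
    apply Finset.sum_eq_zero
    intro j _
    simp [Pi.single_eq_of_ne hi]

lemma pmul_zero_left (hm : 0 < m) (c : D) (a : Fin m → D) (k : Fin m) :
    pmul σ d m (Pi.single (⟨0, hm⟩ : Fin m) c) a k = c * a k := by
  unfold pmul
  rw [Fintype.sum_eq_single (⟨0, hm⟩ : Fin m), Fintype.sum_eq_single k]
  · simp [pow_zero_apply, one_apply']
  · intro j hj
    have hj' : (j : ℕ) ≠ (k : ℕ) := fun h => hj (Fin.ext h)
    have h1 : ¬((⟨0, hm⟩ : Fin m) : ℕ) + (j : ℕ) = (k : ℕ) := by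
      simp only [Fin.val_mk]; omega
    have h2 : ¬((⟨0, hm⟩ : Fin m) : ℕ) + (j : ℕ) = (k : ℕ) + m := by
      have := j.isLt; simp only [Fin.val_mk]; omega
    rw [if_neg h1, if_neg h2]
  · intro i hi
    apply Finset.sum_eq_zero
    intro j _
    simp [Pi.single_eq_of_ne hi]

lemma pmul_zero_right (hm : 0 < m) (c : D) (a : Fin m → D) (k : Fin m) :
    pmul σ d m a (Pi.single (⟨0, hm⟩ : Fin m) c) k = a k * (σ ^ (k : ℕ)) c := by
  unfold pmul
  rw [Fintype.sum_eq_single k, Fintype.sum_eq_single (⟨0, hm⟩ : Fin m)]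
  · simp
  · intro j hj
    simp [Pi.single_eq_of_ne hj]
  · intro i hi
    apply Finset.sum_eq_zero
    intro j _
    by_cases hj : j = (⟨0, hm⟩ : Fin m)
    · subst hj
      have hi' : (i : ℕ) ≠ (k : ℕ) := fun h => hi (Fin.ext h)
      have h1 : ¬(i : ℕ) + ((⟨0, hm⟩ : Fin m) : ℕ) = (k : ℕ) := by
        simp only [Fin.val_mk]; omega
      have h2 : ¬(i : ℕ) + ((⟨0, hm⟩ : Fin m) : ℕ) = (k : ℕ) + m := by
        have := i.isLt; simp only [Fin.val_mk]; omega
      rw [if_neg h1, if_neg h2]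
    · simp [Pi.single_eq_of_ne hj]

/-- `Φ u` is multiplicative for central norm-one `u`. -/
lemma phi_pmul {u : D} (hu : u ∈ Subring.center D) (hN : NN σ m u = 1)
    (a b : Fin m → D) :
    (fun k : Fin m => pmul σ d m a b k * NN σ (k : ℕ) u) =
      pmul σ d m (fun i => a i * NN σ (i : ℕ) u) (fun j => b j * NN σ (j : ℕ) u) := by
  funext k
  unfold pmul
  rw [Finset.sum_mul]
  apply Finset.sum_congr rfl
  intro i _
  rw [Finset.sum_mul]
  apply Finset.sum_congr rfl
  intro j _
  split_ifs with h1 h2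
  · have key : (a i * NN σ (i : ℕ) u) * (σ ^ (i : ℕ)) (b j * NN σ (j : ℕ) u) =
        a i * (σ ^ (i : ℕ)) (b j) * NN σ ((i : ℕ) + (j : ℕ)) u := by
      rw [map_mul, ← mul_assoc, central_right (NN_mem_center σ hu (i : ℕ)),
        mul_assoc, ← NN_add]
    rw [key, h1]
  · have hkm : NN σ ((i : ℕ) + (j : ℕ)) u = NN σ (k : ℕ) u := by
      rw [h2, NN_add, hN, map_one, mul_one]
    have key : (a i * NN σ (i : ℕ) u) * (σ ^ (i : ℕ)) (b j * NN σ (j : ℕ) u) =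
        a i * (σ ^ (i : ℕ)) (b j) * NN σ (k : ℕ) u := by
      rw [map_mul, ← mul_assoc, central_right (NN_mem_center σ hu (i : ℕ)),
        mul_assoc, ← NN_add, hkm]
    rw [key, central_right (NN_mem_center σ hu (k : ℕ))]
  · rw [zero_mul]

end Aux14

open Aux14 in
/-- For a nonassociative generalized cyclic Azumaya algebra `A = (D,σ,d)`,
`d ∈ Dˣ`, the subgroup of `S₀`-automorphisms of `A` extending `id_D` is isomorphic to
`{k ∈ Cˣ : N_{C/S₀}(k) = 1}`: the assignment `k ↦ H_{id,k}` is a bijection onto the set of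
automorphisms extending `id_D`, and it sends products to compositions. -/
theorem aut_extending_id_iso_norm_one {D : Type*} [Ring D]
    (σ : D ≃+* D) (m : ℕ) (hGal : CenterCyclicGalois σ m)
    (d : D) (hd : IsUnit d)
    (Φ : D → (Fin m → D) → Fin m → D)
    (hΦ : Φ = fun k (a : Fin m → D) (i : Fin m) =>
      a i * ((List.range (i : ℕ)).map fun l => (σ ^ l) k).prod) :
    (∀ k ∈ NormOneSet σ m, Φ k ∈ AutExtendingId σ d m hGal.1) ∧
    Set.InjOn Φ (NormOneSet σ m) ∧
    (∀ H ∈ AutExtendingId σ d m hGal.1, ∃ k ∈ NormOneSet σ m, H = Φ k) ∧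
    (∀ k ∈ NormOneSet σ m, ∀ l ∈ NormOneSet σ m, Φ (k * l) = Φ k ∘ Φ l) := by
  obtain ⟨hm, hfixm, hcoord⟩ := hGal
  have hΦ' : Φ = fun k (a : Fin m → D) (i : Fin m) => a i * NN σ (i : ℕ) k := hΦ
  subst hΦ'
  refine ⟨?_, ?_, ?_, ?_⟩
  · -- Part 1: Φ k is an automorphism extending id
    rintro u ⟨huc, huu, huN⟩
    have huN' : NN σ m u = 1 := huN
    refine ⟨?_, ?_, ?_, ?_⟩
    · intro a b
      funext i
      simp [add_mul]
    · intro a b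
      exact phi_pmul σ d huc huN' a b
    · -- bijective
      obtain ⟨v, hv⟩ := huu
      have h1 : u * (↑v⁻¹ : D) = 1 := by rw [← hv]; exact v.mul_inv
      have h2 : (↑v⁻¹ : D) * u = 1 := by rw [← hv]; exact v.inv_mul
      refine Function.bijective_iff_has_inverse.mpr
        ⟨fun a i => a i * NN σ (i : ℕ) (↑v⁻¹ : D), ?_, ?_⟩
      · intro a
        funext i
        show a i * NN σ (i : ℕ) u * NN σ (i : ℕ) (↑v⁻¹ : D) = a i
        rw [mul_assoc, NN_mul_NN_inv σ huc h1, mul_one]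
      · intro a
        funext i
        show a i * NN σ (i : ℕ) (↑v⁻¹ : D) * NN σ (i : ℕ) u = a i
        rw [mul_assoc, NN_mul_NN_inv σ (inv_mem_center huc h1 h2) h2, mul_one]
    · intro c
      funext i
      beta_reduce
      by_cases hi : i = (⟨0, hm⟩ : Fin m)
      · subst hi
        rw [Pi.single_eq_same]
        have h0 : (((⟨0, hm⟩ : Fin m)) : ℕ) = 0 := rfl
        rw [h0, NN_zero, mul_one]
      · rw [Pi.single_eq_of_ne hi, zero_mul]
  · -- Part 2: injectivity
    rintro u ⟨huc, _, huN⟩ v ⟨hvc, _, hvN⟩ huv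
    rcases eq_or_lt_of_le (show 1 ≤ m from hm) with hm1 | hm1
    · have hu1 : u = 1 := by
        have : NN σ m u = 1 := huN
        rwa [← hm1, NN_one'] at this
      have hv1 : v = 1 := by
        have : NN σ m v = 1 := hvN
        rwa [← hm1, NN_one'] at this
      rw [hu1, hv1]
    · have := congrFun (congrFun huv (fun _ => (1 : D))) (⟨1, hm1⟩ : Fin m)
      simpa [NN_one'] using this
  · -- Part 3: surjectivity
    rintro H ⟨hadd, hmulH, hbij, hfix⟩
    have hzero : H 0 = 0 := by
      have h00 : H 0 + 0 = H 0 + H 0 := by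
        rw [add_zero, ← hadd 0 0, add_zero]
      exact (add_left_cancel h00).symm
    rcases eq_or_lt_of_le (show 1 ≤ m from hm) with hm1 | hm1
    · -- m = 1 : H is the identity
      refine ⟨1, ⟨Subring.one_mem _, isUnit_one, NN_one σ m⟩, ?_⟩
      funext a
      have ha : a = Pi.single (⟨0, hm⟩ : Fin m) (a ⟨0, hm⟩) := by
        funext i
        have hi : i = (⟨0, hm⟩ : Fin m) := by
          have := i.isLt
          apply Fin.ext
          simp only [Fin.val_mk]
          omega
        rw [hi, Pi.single_eq_same]
      calc H a = H (Pi.single (⟨0, hm⟩ : Fin m) (a ⟨0, hm⟩)) := by rw [← ha]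
        _ = Pi.single (⟨0, hm⟩ : Fin m) (a ⟨0, hm⟩) := hfix _
        _ = fun i => a i * NN σ (i : ℕ) 1 := by
            rw [← ha]; funext i; rw [NN_one, mul_one]
    · -- m ≥ 2
      set τ : Fin m → D := Pi.single (⟨1, hm1⟩ : Fin m) 1 with hτ
      -- the key commutation relation
      have star : ∀ (k : Fin m) (c : D),
          H τ k * (σ ^ (k : ℕ)) c = σ c * H τ k := by
        intro k c
        have e1 : pmul σ d m τ (Pi.single (⟨0, hm⟩ : Fin m) c) =
            pmul σ d m (Pi.single (⟨0, hm⟩ : Fin m) (σ c)) τ := by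
          funext kk
          rw [pmul_zero_right σ d hm, pmul_zero_left σ d hm]
          by_cases hkk : kk = (⟨1, hm1⟩ : Fin m)
          · subst hkk
            rw [hτ, Pi.single_eq_same, one_mul, mul_one]
            norm_num [pow_one]
          · rw [hτ, Pi.single_eq_of_ne hkk, zero_mul, mul_zero]
        have e2 := congrArg H e1
        rw [hmulH, hmulH, hfix, hfix] at e2
        have := congrFun e2 k
        rw [pmul_zero_right σ d hm, pmul_zero_left σ d hm] at this
        exact this
      -- vanishing of all coefficients except 1
      have hvan : ∀ k : Fin m, k ≠ (⟨1, hm1⟩ : Fin m) → H τ k = 0 := by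
        intro k hk
        obtain ⟨n, x, y, hxy, hsum⟩ := hcoord (k : ℕ) k.isLt
        have hys : ∑ l, x l * σ (y l) = 0 := by
          have h := hsum 1 hm1
          rw [if_neg (by
            intro h'
            exact hk (Fin.ext h'.symm))] at h
          simpa [pow_one] using h
        have hks : ∑ l, x l * (σ ^ (k : ℕ)) (y l) = 1 := by
          have h := hsum (k : ℕ) k.isLt
          rwa [if_pos rfl] at h
        calc H τ k = H τ k * ∑ l, x l * (σ ^ (k : ℕ)) (y l) := by rw [hks, mul_one]
          _ = ∑ l, H τ k * (x l * (σ ^ (k : ℕ)) (y l)) := Finset.mul_sum _ _ _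
          _ = ∑ l, (x l * σ (y l)) * H τ k := by
              apply Finset.sum_congr rfl
              intro l _
              have hxc := Subring.mem_center_iff.mp (hxy l).1 (H τ k)
              rw [← mul_assoc, hxc, mul_assoc, star k (y l), ← mul_assoc]
          _ = (∑ l, x l * σ (y l)) * H τ k := (Finset.sum_mul _ _ _).symm
          _ = 0 := by rw [hys, zero_mul]
      set b : D := H τ (⟨1, hm1⟩ : Fin m) with hb
      -- b is central
      have hbc : b ∈ Subring.center D := by
        rw [Subring.mem_center_iff]
        intro g
        have := star (⟨1, hm1⟩ : Fin m) (σ.symm g)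
        rw [← hb] at this
        have h1 : ((⟨1, hm1⟩ : Fin m) : ℕ) = 1 := rfl
        rw [h1, pow_one, σ.apply_symm_apply] at this
        exact this.symm
      -- H τ = single 1 b
      have hHt : H τ = Pi.single (⟨1, hm1⟩ : Fin m) b := by
        funext kk
        by_cases hkk : kk = (⟨1, hm1⟩ : Fin m)
        · subst hkk; rw [Pi.single_eq_same, hb]
        · rw [Pi.single_eq_of_ne hkk, hvan kk hkk]
      -- powers of t
      have hpow : ∀ (i : ℕ) (h : i < m),
          H (Pi.single (⟨i, h⟩ : Fin m) 1) = Pi.single (⟨i, h⟩ : Fin m) (NN σ i b) := by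
        intro i
        induction i with
        | zero =>
            intro h
            simpa [NN_zero] using hfix 1
        | succ i ih =>
            intro h
            have hi : i < m := Nat.lt_of_succ_lt h
            have e1 : Pi.single (⟨i + 1, h⟩ : Fin m) (1 : D) =
                pmul σ d m (Pi.single (⟨i, hi⟩ : Fin m) 1) τ := by
              funext kk
              rw [hτ, pmul_single_single]
              by_cases hkk : kk = (⟨i + 1, h⟩ : Fin m)
              · subst hkk
                rw [if_pos (by simp), Pi.single_eq_same, map_one, mul_one]
              · have hkk' : (kk : ℕ) ≠ i + 1 := fun h' => hkk (Fin.ext h')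
                rw [if_neg (by simp only [Fin.val_mk]; omega),
                  if_neg (by have := kk.isLt; simp only [Fin.val_mk]; omega),
                  Pi.single_eq_of_ne hkk]
            rw [e1, hmulH, ih hi, hHt]
            funext kk
            rw [pmul_single_single]
            by_cases hkk : kk = (⟨i + 1, h⟩ : Fin m)
            · subst hkk
              rw [if_pos (by simp), Pi.single_eq_same, ← NN_succ]
            · have hkk' : (kk : ℕ) ≠ i + 1 := fun h' => hkk (Fin.ext h')
              rw [if_neg (by simp only [Fin.val_mk]; omega),
                if_neg (by have := kk.isLt; simp only [Fin.val_mk]; omega),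
                Pi.single_eq_of_ne hkk]
      -- norm of b is 1
      have hj : m - 1 < m := by omega
      have hm1' : m - 1 + 1 = m := by omega
      have e2 : pmul σ d m (Pi.single (⟨m - 1, hj⟩ : Fin m) 1) τ =
          Pi.single (⟨0, hm⟩ : Fin m) d := by
        funext kk
        rw [hτ, pmul_single_single]
        by_cases hkk : kk = (⟨0, hm⟩ : Fin m)
        · subst hkk
          rw [if_neg (by have := hm1; simp only [Fin.val_mk]; omega),
            if_pos (by simp only [Fin.val_mk]; omega),
            Pi.single_eq_same, map_one, mul_one]
          have h0 : (((⟨0, hm⟩ : Fin m)) : ℕ) = 0 := rfl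
          rw [h0, pow_zero_apply, one_mul]
        · have hkk' : (kk : ℕ) ≠ 0 := fun h' => hkk (Fin.ext h')
          rw [if_neg (by have := kk.isLt; simp only [Fin.val_mk]; omega),
            if_neg (by have := kk.isLt; simp only [Fin.val_mk]; omega),
            Pi.single_eq_of_ne hkk]
      have e3 := congrArg H e2
      rw [hmulH, hpow (m - 1) hj, hHt, hfix] at e3
      have e4 := congrFun e3 (⟨0, hm⟩ : Fin m)
      rw [pmul_single_single, if_neg (by have := hm1; simp only [Fin.val_mk]; omega),
        if_pos (by simp only [Fin.val_mk]; omega), Pi.single_eq_same] at e4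
      have h0 : (((⟨0, hm⟩ : Fin m)) : ℕ) = 0 := rfl
      rw [h0, pow_zero_apply] at e4
      have hNm : NN σ m b = NN σ (m - 1) b * (σ ^ (m - 1)) b := by
        have := NN_succ σ (m - 1) b
        rwa [hm1'] at this
      have e5 : NN σ m b * d = d := by rw [hNm]; exact e4
      obtain ⟨du, hdu⟩ := hd
      have hNb : NN σ m b = 1 := by
        rw [← hdu] at e5
        have h6 : NN σ m b * ↑du * ↑du⁻¹ = ↑du * ↑du⁻¹ := by rw [e5]
        rwa [mul_assoc, Units.mul_inv, mul_one] at h6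
      -- b is a unit
      have hbr : b * (σ ^ 1) (NN σ (m - 1) b) = 1 := by
        have := NN_add σ 1 (m - 1) b
        rw [(by omega : 1 + (m - 1) = m), hNb, NN_one'] at this
        exact this.symm
      have hrc : (σ ^ 1) (NN σ (m - 1) b) ∈ Subring.center D :=
        mem_center_apply σ (NN_mem_center σ hbc (m - 1)) 1
      have hrb : (σ ^ 1) (NN σ (m - 1) b) * b = 1 := by
        rw [Subring.mem_center_iff.mp hbc ((σ ^ 1) (NN σ (m - 1) b))]
        exact hbr
      have hbu : IsUnit b := ⟨⟨b, (σ ^ 1) (NN σ (m - 1) b), hbr, hrb⟩, rfl⟩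
      refine ⟨b, ⟨hbc, hbu, hNb⟩, ?_⟩
      -- H = Φ b
      funext a
      let Hhom : (Fin m → D) →+ (Fin m → D) := AddMonoidHom.mk' H hadd
      have hH : H a = ∑ i : Fin m, H (Pi.single i (a i)) := by
        have : a = ∑ i : Fin m, Pi.single i (a i) := (Finset.univ_sum_single a).symm
        calc H a = Hhom a := rfl
          _ = Hhom (∑ i : Fin m, Pi.single i (a i)) := by rw [← this]
          _ = ∑ i : Fin m, Hhom (Pi.single i (a i)) := map_sum Hhom _ _
      have hpow' : ∀ i : Fin m, H (Pi.single i (1 : D)) = Pi.single i (NN σ (i : ℕ) b) :=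
        fun i => hpow (i : ℕ) i.isLt
      have hsingle : ∀ i : Fin m, H (Pi.single i (a i)) = Pi.single i (a i * NN σ (i : ℕ) b) := by
        intro i
        have hdec : Pi.single i (a i) =
            pmul σ d m (Pi.single (⟨0, hm⟩ : Fin m) (a i)) (Pi.single i (1 : D)) := by
          funext kk
          rw [pmul_zero_left σ d hm]
          rcases eq_or_ne kk i with h | h
          · subst h; rw [Pi.single_eq_same, Pi.single_eq_same, mul_one]
          · rw [Pi.single_eq_of_ne h, Pi.single_eq_of_ne h, mul_zero]
        rw [hdec, hmulH, hfix, hpow' i]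
        funext kk
        rw [pmul_zero_left σ d hm]
        rcases eq_or_ne kk i with h | h
        · subst h; rw [Pi.single_eq_same, Pi.single_eq_same]
        · rw [Pi.single_eq_of_ne h, Pi.single_eq_of_ne h, mul_zero]
      rw [hH]
      calc ∑ i : Fin m, H (Pi.single i (a i))
          = ∑ i : Fin m, Pi.single i (a i * NN σ (i : ℕ) b) := by
            exact Finset.sum_congr rfl fun i _ => hsingle i
        _ = fun i => a i * NN σ (i : ℕ) b :=
            Finset.univ_sum_single (fun i => a i * NN σ (i : ℕ) b)
  · -- Part 4: products to compositions
    rintro u ⟨huc, _, _⟩ v ⟨hvc, _, _⟩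
    funext a i
    show a i * NN σ (i : ℕ) (u * v) = (a i * NN σ (i : ℕ) v) * NN σ (i : ℕ) u
    rw [NN_mul σ v huc, ← mul_assoc, central_right (NN_mem_center σ huc (i : ℕ))]
end
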